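/- arXiv:1002.0571 — 3 statements merged into one kernel-verified Lean document; each statement's English description precedes it below -/
import Mathlib

section
/- If F : [0,∞) → ℝ satisfies the integral equation F(y) = ∫₀^{y/v} (1−Ψ(l)) dl + (1/v)∫₀^y ψ((y−z)/v) ∫₀^z h(u) F(z−u) du dz for all y ≥ 0, then its Laplace transform is F̂(s) = (1/(v s²)) · (1−ψ̂(sv))/(1−ψ̂(sv)·ĥ(s)). -/
/-!
Multiplying by `e^{-sy}` turns the causal convolution `∫₀^y φ(y - z) χ(z) dz` into the
convolution on `ℝ` of the damped functions `1_{t > 0} e^{-st} φ(t)` and `1_{t > 0} e^{-st} χ(t)`,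
so the Laplace transform of a causal convolution is the product of the transforms. Both terms
of the equation are built from causal convolutions, primitives (convolution with `1`, transform
`1/s`) and the rescaling `t ↦ t / v` (transform `v ψ̂(sv)`): the first term has transform
`(1 - ψ̂(sv)) / (v s²)` and the second `ψ̂(sv) ĥ(s) F̂(s)`, and solving this linear equation
for `F̂(s)` gives the formula.
-/

open MeasureTheory Real Set
open scoped Convolution

noncomputable def realLaplace (f : ℝ → ℝ) (s : ℝ) : ℝ :=
  ∫ t in Ioi 0, exp (-s * t) * f t

def LaplaceIntegrable (f : ℝ → ℝ) (s : ℝ) : Prop :=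
  IntegrableOn (fun t => exp (-s * t) * f t) (Ioi 0)

noncomputable def causalConv (φ χ : ℝ → ℝ) (y : ℝ) : ℝ :=
  ∫ z in (0:ℝ)..y, φ (y - z) * χ z

noncomputable def damped (s : ℝ) (f : ℝ → ℝ) : ℝ → ℝ :=
  (Ioi 0).indicator fun t => exp (-s * t) * f t

section Convolution

variable {φ χ : ℝ → ℝ} {y : ℝ}

theorem convolution_mul_eq_causalConv (hφ : ∀ t ≤ 0, φ t = 0) (hχ : ∀ t ≤ 0, χ t = 0)
    (hy : 0 ≤ y) : (φ ⋆[ContinuousLinearMap.mul ℝ ℝ] χ) y = causalConv φ χ y := by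
  have hsupp :
      (fun t => φ t * χ (y - t)) = (Ioo 0 y).indicator (fun t => φ t * χ (y - t)) := by
    funext t
    by_cases ht : t ∈ Ioo 0 y
    · rw [indicator_of_mem ht]
    · rw [indicator_of_notMem ht]
      rcases le_or_gt t 0 with h0 | h0
      · rw [hφ t h0, zero_mul]
      · rw [hχ (y - t) (by linarith [not_lt.mp fun h => ht ⟨h0, h⟩]), mul_zero]
  simp only [convolution_def, ContinuousLinearMap.mul_apply']
  rw [hsupp, integral_indicator measurableSet_Ioo, ← integral_Ioc_eq_integral_Ioo,
    ← intervalIntegral.integral_of_le hy]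
  simpa [causalConv] using
    intervalIntegral.integral_comp_sub_left (fun z => φ (y - z) * χ z) y (a := 0) (b := y)

theorem convolution_mul_eq_zero_of_nonpos (hφ : ∀ t ≤ 0, φ t = 0) (hχ : ∀ t ≤ 0, χ t = 0)
    (hy : y ≤ 0) : (φ ⋆[ContinuousLinearMap.mul ℝ ℝ] χ) y = 0 := by
  have hzero : ∀ t, φ t * χ (y - t) = 0 := by
    intro t
    rcases le_or_gt t 0 with h0 | h0
    · rw [hφ t h0, zero_mul]
    · rw [hχ (y - t) (by linarith), mul_zero]
  simp only [convolution_def, ContinuousLinearMap.mul_apply', hzero, integral_zero]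

end Convolution

section Damped

variable {s t : ℝ} {f φ χ : ℝ → ℝ}

theorem damped_of_nonpos (ht : t ≤ 0) : damped s f t = 0 :=
  indicator_of_notMem (not_lt.mpr ht) _

theorem damped_of_pos (ht : 0 < t) : damped s f t = exp (-s * t) * f t :=
  indicator_of_mem ht _

theorem integral_damped : ∫ t, damped s f t = realLaplace f s :=
  integral_indicator measurableSet_Ioi

theorem integrable_damped_iff : Integrable (damped s f) ↔ LaplaceIntegrable f s :=
  integrable_indicator_iff measurableSet_Ioi

theorem damped_causalConv :
    damped s (causalConv φ χ) = damped s φ ⋆[ContinuousLinearMap.mul ℝ ℝ] damped s χ := by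
  funext y
  rcases le_or_gt y 0 with hy | hy
  · rw [damped_of_nonpos hy,
      convolution_mul_eq_zero_of_nonpos (fun _ => damped_of_nonpos) (fun _ => damped_of_nonpos) hy]
  rw [damped_of_pos hy,
    convolution_mul_eq_causalConv (fun _ => damped_of_nonpos) (fun _ => damped_of_nonpos) hy.le,
    causalConv, causalConv, ← intervalIntegral.integral_const_mul]
  refine intervalIntegral.integral_congr_ae ?_
  -- at `z = y` the damped `φ` is evaluated at `0`, where it vanishes whatever `φ 0` is
  filter_upwards [volume.ae_ne y] with z hzy hz
  rw [uIoc_of_le hy.le] at hz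
  rw [damped_of_pos (sub_pos.mpr (lt_of_le_of_ne hz.2 hzy)), damped_of_pos hz.1,
    mul_mul_mul_comm, ← exp_add]
  ring_nf

end Damped

section Laplace

variable {s v : ℝ} {f g φ χ ψ : ℝ → ℝ}

theorem LaplaceIntegrable.causalConv (hφ : LaplaceIntegrable φ s) (hχ : LaplaceIntegrable χ s) :
    LaplaceIntegrable (causalConv φ χ) s := by
  rw [← integrable_damped_iff, damped_causalConv]
  exact (integrable_damped_iff.2 hφ).integrable_convolution _ (integrable_damped_iff.2 hχ)

theorem realLaplace_causalConv (hφ : LaplaceIntegrable φ s) (hχ : LaplaceIntegrable χ s) :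
    realLaplace (causalConv φ χ) s = realLaplace φ s * realLaplace χ s := by
  rw [← integral_damped, damped_causalConv,
    integral_convolution _ (integrable_damped_iff.2 hφ) (integrable_damped_iff.2 hχ),
    integral_damped, integral_damped]
  rfl

theorem realLaplace_congr (hfg : ∀ t > 0, f t = g t) : realLaplace f s = realLaplace g s :=
  setIntegral_congr_fun measurableSet_Ioi fun t ht => by rw [hfg t ht]

theorem LaplaceIntegrable.sub (hf : LaplaceIntegrable f s) (hg : LaplaceIntegrable g s) :
    LaplaceIntegrable (fun t => f t - g t) s := by
  simp only [LaplaceIntegrable, mul_sub]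
  exact Integrable.sub hf hg

theorem LaplaceIntegrable.const_mul (hf : LaplaceIntegrable f s) (c : ℝ) :
    LaplaceIntegrable (fun t => c * f t) s := by
  simp only [LaplaceIntegrable, mul_left_comm _ c]
  exact Integrable.const_mul hf c

theorem realLaplace_add (hf : LaplaceIntegrable f s) (hg : LaplaceIntegrable g s) :
    realLaplace (fun t => f t + g t) s = realLaplace f s + realLaplace g s := by
  simp only [realLaplace, mul_add]
  exact integral_add hf hg

theorem realLaplace_sub (hf : LaplaceIntegrable f s) (hg : LaplaceIntegrable g s) :
    realLaplace (fun t => f t - g t) s = realLaplace f s - realLaplace g s := by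
  simp only [realLaplace, mul_sub]
  exact integral_sub hf hg

theorem realLaplace_const_mul (c : ℝ) :
    realLaplace (fun t => c * f t) s = c * realLaplace f s := by
  simp only [realLaplace, mul_left_comm _ c]
  exact integral_const_mul c _

theorem laplaceIntegrable_one (hs : 0 < s) : LaplaceIntegrable (fun _ => 1) s := by
  simpa only [LaplaceIntegrable, mul_one] using exp_neg_integrableOn_Ioi 0 hs

theorem realLaplace_one (hs : 0 < s) : realLaplace (fun _ => 1) s = s⁻¹ := by
  simp only [realLaplace, mul_one]
  rw [integral_exp_mul_Ioi (neg_neg_of_pos hs), mul_zero, exp_zero]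
  field_simp

theorem LaplaceIntegrable.comp_div (hv : 0 < v) (hf : LaplaceIntegrable f (s * v)) :
    LaplaceIntegrable (fun t => f (t / v)) s := by
  have := (integrableOn_Ioi_comp_mul_right_iff (fun t => exp (-(s * v) * t) * f t) 0
    (inv_pos.mpr hv)).2 (by rwa [zero_mul])
  refine this.congr_fun (fun t _ => ?_) measurableSet_Ioi
  field_simp

theorem realLaplace_comp_div (hv : 0 < v) :
    realLaplace (fun t => f (t / v)) s = v * realLaplace f (s * v) := by
  have := integral_comp_mul_right_Ioi (fun t => exp (-(s * v) * t) * f t) 0 (inv_pos.mpr hv)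
  simp only [zero_mul, inv_inv, smul_eq_mul] at this
  rw [realLaplace, realLaplace, ← this]
  refine setIntegral_congr_fun measurableSet_Ioi (fun t _ => ?_)
  field_simp

theorem causalConv_one_left (g : ℝ → ℝ) :
    causalConv (fun _ => 1) g = fun y => ∫ z in (0:ℝ)..y, g z := by
  funext y
  simp only [causalConv, one_mul]

theorem LaplaceIntegrable.primitive (hs : 0 < s) (hg : LaplaceIntegrable g s) :
    LaplaceIntegrable (fun y => ∫ z in (0:ℝ)..y, g z) s := by
  rw [← causalConv_one_left]
  exact (laplaceIntegrable_one hs).causalConv hg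

theorem realLaplace_primitive (hs : 0 < s) (hg : LaplaceIntegrable g s) :
    realLaplace (fun y => ∫ z in (0:ℝ)..y, g z) s = realLaplace g s / s := by
  rw [← causalConv_one_left, realLaplace_causalConv (laplaceIntegrable_one hs) hg,
    realLaplace_one hs, inv_mul_eq_div]

theorem LaplaceIntegrable.integral_survival (hv : 0 < v) (hs : 0 < s)
    (hψ : LaplaceIntegrable ψ (s * v)) :
    LaplaceIntegrable (fun y => ∫ l in (0:ℝ)..(y / v), (1 - ∫ u in (0:ℝ)..l, ψ u)) s := by
  have hsv : 0 < s * v := mul_pos hs hv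
  exact (((laplaceIntegrable_one hsv).sub (hψ.primitive hsv)).primitive hsv).comp_div hv

theorem realLaplace_integral_survival (hv : 0 < v) (hs : 0 < s)
    (hψ : LaplaceIntegrable ψ (s * v)) :
    realLaplace (fun y => ∫ l in (0:ℝ)..(y / v), (1 - ∫ u in (0:ℝ)..l, ψ u)) s
      = (1 - realLaplace ψ (s * v)) / (v * s ^ 2) := by
  have hsv : 0 < s * v := mul_pos hs hv
  have hΨ := hψ.primitive hsv
  rw [realLaplace_comp_div (f := fun x => ∫ l in (0:ℝ)..x, (1 - ∫ u in (0:ℝ)..l, ψ u)) hv,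
    realLaplace_primitive hsv ((laplaceIntegrable_one hsv).sub hΨ),
    realLaplace_sub (laplaceIntegrable_one hsv) hΨ, realLaplace_one hsv,
    realLaplace_primitive hsv hψ]
  field_simp

end Laplace

theorem stmt_1_general (F ψ h : ℝ → ℝ) (v : ℝ) (hv : 0 < v)
    (heq : ∀ y ≥ (0:ℝ),
      F y = (∫ l in (0:ℝ)..(y / v), (1 - ∫ u in (0:ℝ)..l, ψ u))
        + (1 / v) * ∫ z in (0:ℝ)..y,
            ψ ((y - z) / v) * ∫ u in (0:ℝ)..z, h u * F (z - u))
    (s : ℝ) (hs : 0 < s)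
    (hFi : IntegrableOn (fun y => Real.exp (-s * y) * F y) (Set.Ioi 0))
    (hψi : IntegrableOn (fun t => Real.exp (-(s * v) * t) * ψ t) (Set.Ioi 0))
    (hhi : IntegrableOn (fun u => Real.exp (-s * u) * h u) (Set.Ioi 0))
    (hne : (∫ t in Set.Ioi (0:ℝ), Real.exp (-(s * v) * t) * ψ t)
        * (∫ u in Set.Ioi (0:ℝ), Real.exp (-s * u) * h u) ≠ 1) :
    ∫ y in Set.Ioi (0:ℝ), Real.exp (-s * y) * F y
      = (1 / (v * s ^ 2))
        * (1 - ∫ t in Set.Ioi (0:ℝ), Real.exp (-(s * v) * t) * ψ t)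
        / (1 - (∫ t in Set.Ioi (0:ℝ), Real.exp (-(s * v) * t) * ψ t)
            * (∫ u in Set.Ioi (0:ℝ), Real.exp (-s * u) * h u)) := by
  change realLaplace F s = 1 / (v * s ^ 2) * (1 - realLaplace ψ (s * v))
    / (1 - realLaplace ψ (s * v) * realLaplace h s)
  have hψv : LaplaceIntegrable (fun t => ψ (t / v)) s := LaplaceIntegrable.comp_div hv hψi
  have hFh : LaplaceIntegrable (causalConv F h) s := LaplaceIntegrable.causalConv hFi hhi
  have hinner : (fun z => ∫ u in (0:ℝ)..z, h u * F (z - u)) = causalConv F h := by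
    funext z
    simp only [causalConv, mul_comm (h _)]
  have hF : realLaplace F s = (1 - realLaplace ψ (s * v)) / (v * s ^ 2)
      + realLaplace ψ (s * v) * realLaplace h s * realLaplace F s := by
    calc realLaplace F s
        = realLaplace (fun y => (∫ l in (0:ℝ)..(y / v), (1 - ∫ u in (0:ℝ)..l, ψ u))
            + v⁻¹ * causalConv (fun t => ψ (t / v)) (causalConv F h) y) s :=
          realLaplace_congr fun y hy => by rw [heq y hy.le, one_div, ← hinner]; rfl
      _ = (1 - realLaplace ψ (s * v)) / (v * s ^ 2)
            + v⁻¹ * (v * realLaplace ψ (s * v) * (realLaplace F s * realLaplace h s)) := by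
          rw [realLaplace_add (LaplaceIntegrable.integral_survival hv hs hψi)
              ((hψv.causalConv hFh).const_mul _), realLaplace_const_mul,
            realLaplace_integral_survival hv hs hψi, realLaplace_causalConv hψv hFh,
            realLaplace_comp_div hv, realLaplace_causalConv hFi hhi]
      _ = _ := by
          field_simp
  have hne' : 1 - realLaplace ψ (s * v) * realLaplace h s ≠ 0 := sub_ne_zero.mpr hne.symm
  rw [eq_div_iff hne']
  linear_combination hF

/-- If `F(y) = ∫₀^{y/v}(1−Ψ(l))dl + (1/v)∫₀^y ψ((y−z)/v) ∫₀^z h(u)F(z−u) du dz`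
then `F̂(s) = (1/(vs²))(1−ψ̂(sv))/(1−ψ̂(sv)ĥ(s))`. -/
theorem stmt_1 (F ψ h : ℝ → ℝ) (v : ℝ) (hv : 0 < v)
    (hψ_nonneg : ∀ t, 0 ≤ ψ t) (hψ_prob : ∫ t in Set.Ioi (0:ℝ), ψ t = 1)
    (hh_nonneg : ∀ u, 0 ≤ h u) (hh_prob : ∫ u in Set.Ioi (0:ℝ), h u = 1)
    (heq : ∀ y ≥ (0:ℝ),
      F y = (∫ l in (0:ℝ)..(y / v), (1 - ∫ u in (0:ℝ)..l, ψ u))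
        + (1 / v) * ∫ z in (0:ℝ)..y,
            ψ ((y - z) / v) * ∫ u in (0:ℝ)..z, h u * F (z - u))
    (s : ℝ) (hs : 0 < s)
    (hFi : IntegrableOn (fun y => Real.exp (-s * y) * F y) (Set.Ioi 0))
    (hψi : IntegrableOn (fun t => Real.exp (-(s * v) * t) * ψ t) (Set.Ioi 0))
    (hhi : IntegrableOn (fun u => Real.exp (-s * u) * h u) (Set.Ioi 0))
    (hne : (∫ t in Set.Ioi (0:ℝ), Real.exp (-(s * v) * t) * ψ t)
        * (∫ u in Set.Ioi (0:ℝ), Real.exp (-s * u) * h u) ≠ 1) :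
    ∫ y in Set.Ioi (0:ℝ), Real.exp (-s * y) * F y
      = (1 / (v * s ^ 2))
        * (1 - ∫ t in Set.Ioi (0:ℝ), Real.exp (-(s * v) * t) * ψ t)
        / (1 - (∫ t in Set.Ioi (0:ℝ), Real.exp (-(s * v) * t) * ψ t)
            * (∫ u in Set.Ioi (0:ℝ), Real.exp (-s * u) * h u)) :=
  stmt_1_general F ψ h v hv heq s hs hFi hψi hhi hne
end

section
/- For λ, γ, v > 0 with 4λ < γv, the Laplace transform of ρ ↦ (2γv/(λ+2γv))ρ + (λ²/(z₊−z₋))[(1−e^{−z₋ρ})/z₋² − (1−e^{−z₊ρ})/z₊²] (with z_± = λ + (γv/2)(1±√(1−4λ/(γv)))) evaluated at s > 0 equals (1/s²)·(2λγv + (2λ+γv)s + s²)/(λ(λ+2γv) + (2λ+γv)s + s²). -/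
/-!
Multiplied by `e^{-sρ}`, the integrand is a combination of `ρ e^{-sρ}`, `e^{-sρ}` and
`e^{-(s+z_±)ρ}`, whose integrals over `(0, ∞)` are `1/s²`, `1/s` and `1/(s+z_±)`. The resulting
rational function of `z₊, z₋` is symmetric, so Vieta's formulas `z₊ + z₋ = 2λ + γv` and
`z₊ z₋ = λ(λ + 2γv)` reduce it to the stated rational function of `s`.
-/

open MeasureTheory Real Set

section LaplaceTransform

variable {s : ℝ}

lemma integrableOn_exp_neg_mul_Ioi (hs : 0 < s) :
    IntegrableOn (fun ρ : ℝ => exp (-s * ρ)) (Ioi 0) :=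
  integrableOn_exp_mul_Ioi (neg_neg_of_pos hs) 0

lemma integral_exp_neg_mul_Ioi (hs : 0 < s) :
    ∫ ρ in Ioi (0 : ℝ), exp (-s * ρ) = 1 / s := by
  rw [integral_exp_mul_Ioi (neg_neg_of_pos hs), mul_zero, exp_zero, neg_div_neg_eq]

lemma integral_mul_exp_neg_mul_Ioi (hs : 0 < s) :
    ∫ ρ in Ioi (0 : ℝ), ρ * exp (-s * ρ) = 1 / s ^ 2 := by
  have h := integral_rpow_mul_exp_neg_mul_Ioi two_pos hs
  norm_num [Gamma_two, neg_mul] at h ⊢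
  exact h

lemma integrableOn_mul_exp_neg_mul_Ioi (hs : 0 < s) :
    IntegrableOn (fun ρ : ℝ => ρ * exp (-s * ρ)) (Ioi 0) :=
  .of_integral_ne_zero (by rw [integral_mul_exp_neg_mul_Ioi hs]; positivity)

variable {z : ℝ}

lemma exp_neg_mul_mul_one_sub_exp_neg_mul (ρ : ℝ) :
    exp (-s * ρ) * (1 - exp (-z * ρ)) = exp (-s * ρ) - exp (-(s + z) * ρ) := by
  rw [mul_one_sub, ← exp_add]
  ring_nf

lemma integrableOn_exp_neg_mul_mul_one_sub_exp_neg_mul (hs : 0 < s) (hz : 0 < s + z) :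
    IntegrableOn (fun ρ : ℝ => exp (-s * ρ) * (1 - exp (-z * ρ))) (Ioi 0) := by
  simp_rw [exp_neg_mul_mul_one_sub_exp_neg_mul]
  exact (integrableOn_exp_neg_mul_Ioi hs).sub (integrableOn_exp_neg_mul_Ioi hz)

lemma integral_exp_neg_mul_mul_one_sub_exp_neg_mul (hs : 0 < s) (hz : 0 < s + z) :
    ∫ ρ in Ioi (0 : ℝ), exp (-s * ρ) * (1 - exp (-z * ρ)) = 1 / s - 1 / (s + z) := by
  simp_rw [exp_neg_mul_mul_one_sub_exp_neg_mul]
  rw [integral_sub (integrableOn_exp_neg_mul_Ioi hs) (integrableOn_exp_neg_mul_Ioi hz),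
    integral_exp_neg_mul_Ioi hs, integral_exp_neg_mul_Ioi hz]

end LaplaceTransform

lemma integral_exp_neg_mul_mul_two_rate {s zp zm : ℝ} (a c : ℝ) (hs : 0 < s)
    (hzp : 0 < s + zp) (hzm : 0 < s + zm) :
    ∫ ρ in Ioi (0 : ℝ), exp (-s * ρ) * (a * ρ
        + c * ((1 - exp (-zm * ρ)) / zm ^ 2 - (1 - exp (-zp * ρ)) / zp ^ 2))
      = a / s ^ 2 + c * ((1 / s - 1 / (s + zm)) / zm ^ 2 - (1 / s - 1 / (s + zp)) / zp ^ 2) := by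
  have hsplit : ∀ ρ : ℝ, exp (-s * ρ) * (a * ρ
        + c * ((1 - exp (-zm * ρ)) / zm ^ 2 - (1 - exp (-zp * ρ)) / zp ^ 2))
      = a * (ρ * exp (-s * ρ)) + (c / zm ^ 2 * (exp (-s * ρ) * (1 - exp (-zm * ρ)))
        - c / zp ^ 2 * (exp (-s * ρ) * (1 - exp (-zp * ρ)))) := fun ρ => by ring
  have hm := (integrableOn_exp_neg_mul_mul_one_sub_exp_neg_mul hs hzm).const_mul (c / zm ^ 2)
  have hp := (integrableOn_exp_neg_mul_mul_one_sub_exp_neg_mul hs hzp).const_mul (c / zp ^ 2)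
  simp_rw [hsplit]
  rw [integral_add ((integrableOn_mul_exp_neg_mul_Ioi hs).const_mul a) (hm.sub' hp),
    integral_sub hm hp, integral_const_mul, integral_const_mul, integral_const_mul,
    integral_mul_exp_neg_mul_Ioi hs, integral_exp_neg_mul_mul_one_sub_exp_neg_mul hs hzm,
    integral_exp_neg_mul_mul_one_sub_exp_neg_mul hs hzp]
  ring

-- The divided difference at `zm`, `zp` of `z ↦ 1 / (s z (s + z))` is symmetric in `zp`, `zm`.
lemma two_rate_divided_difference {s zp zm : ℝ} (hs : s ≠ 0) (hzp : zp ≠ 0)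
    (hzm : zm ≠ 0) (hszp : s + zp ≠ 0) (hszm : s + zm ≠ 0) (hne : zp ≠ zm) :
    1 / (zp - zm) * ((1 / s - 1 / (s + zm)) / zm ^ 2 - (1 / s - 1 / (s + zp)) / zp ^ 2)
      = (s + (zp + zm)) / (s * (zp * zm) * (zp * zm + (zp + zm) * s + s ^ 2)) := by
  have hsub : zp - zm ≠ 0 := sub_ne_zero.mpr hne
  have hprod : zp * zm + (zp + zm) * s + s ^ 2 = (s + zp) * (s + zm) := by ring
  rw [hprod]
  field_simp
  ring

-- `zp`, `zm` are the roots of `z ^ 2 - (2 * lam + d) * z + lam * (lam + 2 * d)`.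
section CharacteristicRoots

variable {lam d zp zm : ℝ}

lemma zp_add_zm_eq (hzp : zp = lam + (d / 2) * (1 + sqrt (1 - 4 * lam / d)))
    (hzm : zm = lam + (d / 2) * (1 - sqrt (1 - 4 * lam / d))) :
    zp + zm = 2 * lam + d := by
  rw [hzp, hzm]
  ring

lemma zp_mul_zm_eq (hd : 0 < d) (h : 4 * lam ≤ d)
    (hzp : zp = lam + (d / 2) * (1 + sqrt (1 - 4 * lam / d)))
    (hzm : zm = lam + (d / 2) * (1 - sqrt (1 - 4 * lam / d))) :
    zp * zm = lam * (lam + 2 * d) := by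
  have hsq : sqrt (1 - 4 * lam / d) ^ 2 = 1 - 4 * lam / d :=
    sq_sqrt (sub_nonneg.mpr ((div_le_one hd).mpr h))
  rw [hzp, hzm]
  field_simp at hsq ⊢
  linear_combination (-d) * hsq

lemma zm_pos (hlam : 0 < lam) (hd : 0 < d)
    (hzm : zm = lam + (d / 2) * (1 - sqrt (1 - 4 * lam / d))) :
    0 < zm := by
  have hr : sqrt (1 - 4 * lam / d) ≤ 1 := sqrt_le_one.mpr (sub_le_self _ (by positivity))
  rw [hzm]
  nlinarith

lemma zm_lt_zp (hd : 0 < d) (h : 4 * lam < d)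
    (hzp : zp = lam + (d / 2) * (1 + sqrt (1 - 4 * lam / d)))
    (hzm : zm = lam + (d / 2) * (1 - sqrt (1 - 4 * lam / d))) :
    zm < zp := by
  have hr : 0 < sqrt (1 - 4 * lam / d) := sqrt_pos.mpr (sub_pos.mpr ((div_lt_one hd).mpr h))
  rw [hzp, hzm]
  nlinarith

end CharacteristicRoots

/-- Laplace transform of the mean exit time for the favorable-drift case:
`T̂(s) = (1/s²)(2λγv + (2λ+γv)s + s²)/(λ(λ+2γv) + (2λ+γv)s + s²)`. -/
theorem stmt_14 (lam gam v zp zm : ℝ) (hlam : 0 < lam) (hgam : 0 < gam)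
    (hv : 0 < v) (h4 : 4 * lam < gam * v)
    (hzp : zp = lam + (gam * v / 2) * (1 + Real.sqrt (1 - 4 * lam / (gam * v))))
    (hzm : zm = lam + (gam * v / 2) * (1 - Real.sqrt (1 - 4 * lam / (gam * v))))
    (s : ℝ) (hs : 0 < s) :
    ∫ ρ in Set.Ioi (0:ℝ),
        Real.exp (-s * ρ) * ((2 * gam * v / (lam + 2 * gam * v)) * ρ
          + (lam ^ 2 / (zp - zm))
            * ((1 - Real.exp (-zm * ρ)) / zm ^ 2 - (1 - Real.exp (-zp * ρ)) / zp ^ 2))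
      = (1 / s ^ 2) * (2 * lam * gam * v + (2 * lam + gam * v) * s + s ^ 2)
          / (lam * (lam + 2 * gam * v) + (2 * lam + gam * v) * s + s ^ 2) := by
  have hd : 0 < gam * v := mul_pos hgam hv
  have hzm0 : 0 < zm := zm_pos hlam hd hzm
  have hlt : zm < zp := zm_lt_zp hd h4 hzp hzm
  rw [integral_exp_neg_mul_mul_two_rate _ _ hs (by linarith) (by linarith),
    div_eq_mul_one_div (lam ^ 2), mul_assoc (lam ^ 2),
    two_rate_divided_difference hs.ne' (by linarith) hzm0.ne' (by linarith)
      (by linarith) hlt.ne',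
    zp_add_zm_eq hzp hzm, zp_mul_zm_eq hd h4.le hzp hzm]
  have hden : 0 < lam * (lam + 2 * (gam * v)) + (2 * lam + gam * v) * s + s ^ 2 := by positivity
  field_simp
  ring
end

section
/- Let λ, γ, v > 0 and 0 < p ≤ 1. Then every root z ∈ ℂ of the polynomial P(z) = z³ + (2λ+γv)z² + λ(λ+2γv)z + pλ²γv has strictly negative real part. -/
/-!
Routh–Hurwitz for a real cubic `z³ + a z² + b z + c`. Writing a root as `x + iy` with `x ≥ 0`,
a real root is impossible since every coefficient is positive. Otherwise the imaginary part of the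
equation, divided by `y`, gives `y² = 3x² + 2ax + b`; substituting into the real part leaves
`8x³ + 8ax² + 2(a² + b)x + (ab - c) = 0`, whose left side is positive when `ab > c`.
-/

theorem Complex.re_neg_of_cubic_eq_zero {a b c : ℝ} (ha : 0 < a) (hc : 0 < c) (habc : c < a * b)
    {z : ℂ} (hz : z ^ 3 + a * z ^ 2 + b * z + c = 0) : z.re < 0 := by
  obtain ⟨x, y⟩ := z
  by_contra! hx
  change 0 ≤ x at hx
  have hb : 0 < b := pos_of_mul_pos_right (hc.trans habc) ha.le
  have hre : x ^ 3 - 3 * x * y ^ 2 + a * (x ^ 2 - y ^ 2) + b * x + c = 0 := by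
    have := congrArg Complex.re hz
    simp only [pow_succ, pow_zero, one_mul, add_re, mul_re, mul_im, ofReal_re, ofReal_im, zero_mul,
      sub_zero, zero_re] at this
    linear_combination this
  have him : y * (3 * x ^ 2 + 2 * a * x + b - y ^ 2) = 0 := by
    have := congrArg Complex.im hz
    simp only [pow_succ, pow_zero, one_mul, add_im, mul_im, mul_re, ofReal_re, ofReal_im, zero_mul,
      add_zero, zero_im] at this
    linear_combination this
  rcases mul_eq_zero.mp him with rfl | hy
  · nlinarith [pow_nonneg hx 3, mul_nonneg ha.le (sq_nonneg x), mul_nonneg hb.le hx]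
  · have hreduced : 8 * x ^ 3 + 8 * a * x ^ 2 + 2 * (a ^ 2 + b) * x + (a * b - c) = 0 := by
      linear_combination (3 * x + a) * hy - hre
    have hab : 0 ≤ a ^ 2 + b := by positivity
    nlinarith [pow_nonneg hx 3, mul_nonneg ha.le (sq_nonneg x), mul_nonneg hab hx]

/-- Hurwitz stability: every complex root of
`z³ + (2λ+γv)z² + λ(λ+2γv)z + pλ²γv` has negative real part. -/
theorem stmt_16 (lam gam v p : ℝ) (hlam : 0 < lam) (hgam : 0 < gam) (hv : 0 < v)
    (hp : 0 < p) (hp1 : p ≤ 1) :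
    ∀ z : ℂ,
      z ^ 3 + (2 * lam + gam * v) * z ^ 2 + (lam : ℂ) * (lam + 2 * gam * v) * z
          + p * (lam : ℂ) ^ 2 * gam * v = 0
        → z.re < 0 := by
  intro z hz
  have hgv : 0 < gam * v := mul_pos hgam hv
  refine Complex.re_neg_of_cubic_eq_zero (a := 2 * lam + gam * v)
    (b := lam * (lam + 2 * gam * v)) (c := p * lam ^ 2 * gam * v) (by positivity) (by positivity) ?_
    (by push_cast; linear_combination hz)
  have hpc : p * (lam ^ 2 * gam * v) ≤ lam ^ 2 * gam * v :=
    mul_le_of_le_one_left (by positivity) hp1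
  nlinarith [mul_pos (mul_pos hlam hlam) hlam, mul_pos (mul_pos hlam hlam) hgv]
end
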